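/- arXiv:1309.6013 — 4 statements merged into one kernel-verified Lean document; each statement's English description precedes it below -/
import Mathlib

section
/- For every matrix M ∈ ℝ^{d1×d2}, the trace-norm satisfies ‖M‖_* / √(d1 d2) ≤ ‖M‖_max; equivalently, ‖M‖_* ≤ √(d1 d2) · ‖M‖_max. -/
open scoped BigOperators
open Matrix

/-- The trace-norm (nuclear norm) of a real matrix: the sum of its singular values,
i.e. the square roots of the eigenvalues of `M * Mᵀ`. -/
noncomputable def traceNorm {d1 d2 : ℕ} (M : Matrix (Fin d1) (Fin d2) ℝ) : ℝ :=
  ∑ i, Real.sqrt ((Matrix.isHermitian_mul_conjTranspose_self M).eigenvalues i)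

/-- The largest `ℓ₂`-norm of a row of a matrix (the `(2,∞)` operator norm). -/
noncomputable def rowMaxNorm {n k : ℕ} (U : Matrix (Fin n) (Fin k) ℝ) : ℝ :=
  ⨆ i, Real.sqrt (∑ j, (U i j) ^ 2)

/-- The max-norm of a real matrix: the infimum of `‖U‖_{2,∞} ‖V‖_{2,∞}` over all
factorizations `M = U * Vᵀ`. -/
noncomputable def maxNorm {d1 d2 : ℕ} (M : Matrix (Fin d1) (Fin d2) ℝ) : ℝ :=
  sInf { c : ℝ | ∃ (k : ℕ) (U : Matrix (Fin d1) (Fin k) ℝ) (V : Matrix (Fin d2) (Fin k) ℝ),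
    0 < k ∧ M = U * Vᵀ ∧ c = rowMaxNorm U * rowMaxNorm V }

/-!
Let `σᵢ` be the singular values of `M = U Vᵀ`, `uᵢ` orthonormal eigenvectors of `M Mᵀ` and
`vᵢ = Mᵀ uᵢ / σᵢ`; the `vᵢ` with `σᵢ ≠ 0` are orthonormal as well, and
`σᵢ = ⟪uᵢ, M vᵢ⟫ = ⟪Uᵀ uᵢ, Vᵀ vᵢ⟫`. Cauchy–Schwarz followed by Bessel's inequality for the two
orthonormal families gives `‖M‖_* ≤ ‖U‖_F ‖V‖_F`. Since `U` has `d₁` rows and `V` has `d₂`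
rows, `‖U‖_F ≤ √d₁ ‖U‖_{2,∞}` and `‖V‖_F ≤ √d₂ ‖V‖_{2,∞}`; it remains to take the infimum over
all factorizations.
-/

open scoped Matrix.Norms.Frobenius RealInnerProductSpace
open WithLp (toLp)

namespace Matrix

section

variable {ι m n k : Type*} [Fintype ι] [Fintype m] [Fintype n] [Fintype k]

theorem frobenius_norm_sq_eq_sum_norm_row (A : Matrix m n ℝ) :
    ‖A‖ ^ 2 = ∑ i, ‖toLp 2 (A i)‖ ^ 2 :=
  PiLp.norm_sq_eq_of_L2 _ (toLp 2 fun i => toLp 2 (A i))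

omit [Fintype m] in
theorem toEuclideanLin_apply_eq_inner_row [DecidableEq n] (B : Matrix m n ℝ)
    (x : EuclideanSpace ℝ n) (t : m) :
    toEuclideanLin B x t = ⟪toLp 2 (B t), x⟫ := by
  simp [EuclideanSpace.inner_eq_star_dotProduct, mulVec, dotProduct_comm]

theorem sum_norm_toEuclideanLin_sq_le [DecidableEq n] {a : ι → EuclideanSpace ℝ n}
    (ha : Orthonormal ℝ a) (B : Matrix m n ℝ) :
    ∑ i, ‖toEuclideanLin B (a i)‖ ^ 2 ≤ ‖B‖ ^ 2 :=
  calc ∑ i, ‖toEuclideanLin B (a i)‖ ^ 2 = ∑ t, ∑ i, ‖⟪a i, toLp 2 (B t)⟫‖ ^ 2 := by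
        simp only [EuclideanSpace.norm_sq_eq, toEuclideanLin_apply_eq_inner_row, real_inner_comm]
        exact Finset.sum_comm
    _ ≤ ∑ t, ‖toLp 2 (B t)‖ ^ 2 := Finset.sum_le_sum fun t _ => ha.sum_inner_products_le _
    _ = ‖B‖ ^ 2 := (frobenius_norm_sq_eq_sum_norm_row B).symm

variable [DecidableEq m] [DecidableEq n] [DecidableEq k]

theorem inner_toEuclideanLin_mul (A : Matrix m k ℝ) (B : Matrix k n ℝ)
    (x : EuclideanSpace ℝ m) (y : EuclideanSpace ℝ n) :
    ⟪x, toEuclideanLin (A * B) y⟫ = ⟪toEuclideanLin Aᴴ x, toEuclideanLin B y⟫ := by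
  rw [toEuclideanLin_conjTranspose_eq_adjoint, LinearMap.adjoint_inner_left, toLpLin_mul_same,
    LinearMap.comp_apply]

theorem sum_inner_toEuclideanLin_mul_le {a : ι → EuclideanSpace ℝ m}
    {b : ι → EuclideanSpace ℝ n} (ha : Orthonormal ℝ a) (hb : Orthonormal ℝ b)
    (A : Matrix m k ℝ) (B : Matrix k n ℝ) :
    ∑ i, ⟪a i, toEuclideanLin (A * B) (b i)⟫ ≤ ‖A‖ * ‖B‖ :=
  calc ∑ i, ⟪a i, toEuclideanLin (A * B) (b i)⟫
      ≤ ∑ i, ‖toEuclideanLin Aᴴ (a i)‖ * ‖toEuclideanLin B (b i)‖ :=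
        Finset.sum_le_sum fun i _ => inner_toEuclideanLin_mul A B _ _ ▸ real_inner_le_norm _ _
    _ ≤ √(∑ i, ‖toEuclideanLin Aᴴ (a i)‖ ^ 2) * √(∑ i, ‖toEuclideanLin B (b i)‖ ^ 2) :=
        Real.sum_mul_le_sqrt_mul_sqrt _ _ _
    _ ≤ √(‖Aᴴ‖ ^ 2) * √(‖B‖ ^ 2) := by
        gcongr
        exacts [sum_norm_toEuclideanLin_sq_le ha _, sum_norm_toEuclideanLin_sq_le hb _]
    _ = ‖A‖ * ‖B‖ := by
        rw [frobenius_norm_conjTranspose, Real.sqrt_sq (norm_nonneg _),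
          Real.sqrt_sq (norm_nonneg _)]

end

section SingularVectors

variable {m n : Type*} [Fintype m] [DecidableEq m] [Fintype n] (M : Matrix m n ℝ)

noncomputable def singularValue (i : m) : ℝ :=
  √((isHermitian_mul_conjTranspose_self M).eigenvalues i)

noncomputable def leftSingularVector (i : m) : EuclideanSpace ℝ m :=
  (isHermitian_mul_conjTranspose_self M).eigenvectorBasis i

/-- For `σᵢ = 0` this is `0` (as `0⁻¹ = 0`), so only the `vᵢ` with `σᵢ ≠ 0` are orthonormal. -/
noncomputable def rightSingularVector (i : m) : EuclideanSpace ℝ n :=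
  (singularValue M i)⁻¹ • toEuclideanLin Mᴴ (leftSingularVector M i)

theorem orthonormal_leftSingularVector : Orthonormal ℝ (leftSingularVector M) :=
  (isHermitian_mul_conjTranspose_self M).eigenvectorBasis.orthonormal

theorem singularValue_sq (i : m) :
    singularValue M i ^ 2 = (isHermitian_mul_conjTranspose_self M).eigenvalues i :=
  Real.sq_sqrt ((posSemidef_self_mul_conjTranspose M).eigenvalues_nonneg i)

theorem toEuclideanLin_mul_conjTranspose_leftSingularVector (i : m) :
    toEuclideanLin (M * Mᴴ) (leftSingularVector M i) =
      singularValue M i ^ 2 • leftSingularVector M i := by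
  rw [singularValue_sq, toLpLin_apply, leftSingularVector,
    (isHermitian_mul_conjTranspose_self M).mulVec_eigenvectorBasis]
  rfl

variable [DecidableEq n]

theorem inner_conjTranspose_leftSingularVector (i j : m) :
    ⟪toEuclideanLin Mᴴ (leftSingularVector M i), toEuclideanLin Mᴴ (leftSingularVector M j)⟫ =
      singularValue M j ^ 2 * ⟪leftSingularVector M i, leftSingularVector M j⟫ := by
  rw [← inner_toEuclideanLin_mul, toEuclideanLin_mul_conjTranspose_leftSingularVector,
    real_inner_smul_right]

theorem inner_leftSingularVector_rightSingularVector (i : m) :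
    ⟪leftSingularVector M i, toEuclideanLin M (rightSingularVector M i)⟫ = singularValue M i := by
  rw [rightSingularVector, map_smul, real_inner_smul_right, ← LinearMap.comp_apply,
    ← toLpLin_mul_same, toEuclideanLin_mul_conjTranspose_leftSingularVector, real_inner_smul_right,
    real_inner_self_eq_norm_sq, (orthonormal_leftSingularVector M).1 i, one_pow, mul_one, sq,
    ← mul_assoc, inv_mul_mul_self]

theorem orthonormal_rightSingularVector :
    Orthonormal ℝ fun i : {i // singularValue M i ≠ 0} => rightSingularVector M i := by
  rw [orthonormal_iff_ite]
  rintro ⟨i, hi⟩ ⟨j, hj⟩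
  simp only [rightSingularVector, real_inner_smul_left, real_inner_smul_right,
    inner_conjTranspose_leftSingularVector,
    orthonormal_iff_ite.mp (orthonormal_leftSingularVector M) i j, Subtype.mk.injEq]
  split_ifs with h
  · subst h
    field_simp
  · simp

end SingularVectors

end Matrix

theorem traceNorm_eq_sum_inner_singularVector {d1 d2 : ℕ} (M : Matrix (Fin d1) (Fin d2) ℝ) :
    traceNorm M = ∑ i : {i // singularValue M i ≠ 0},
      ⟪leftSingularVector M i, toEuclideanLin M (rightSingularVector M i)⟫ := by
  simp only [inner_leftSingularVector_rightSingularVector]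
  rw [← Finset.sum_subtype _ (fun _ => Finset.mem_filter_univ _), Finset.sum_filter_ne_zero]
  rfl

theorem traceNorm_mul_le {d1 d2 : ℕ} {k : Type*} [Fintype k] [DecidableEq k]
    (A : Matrix (Fin d1) k ℝ) (B : Matrix k (Fin d2) ℝ) : traceNorm (A * B) ≤ ‖A‖ * ‖B‖ := by
  rw [traceNorm_eq_sum_inner_singularVector]
  exact sum_inner_toEuclideanLin_mul_le
    ((orthonormal_leftSingularVector _).comp _ Subtype.val_injective)
    (orthonormal_rightSingularVector _) A B

section rowMaxNorm

variable {n k : ℕ} (U : Matrix (Fin n) (Fin k) ℝ)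

theorem rowMaxNorm_nonneg : 0 ≤ rowMaxNorm U :=
  Real.iSup_nonneg fun _ => Real.sqrt_nonneg _

theorem norm_row_le_rowMaxNorm (i : Fin n) : ‖toLp 2 (U i)‖ ≤ rowMaxNorm U := by
  rw [EuclideanSpace.norm_eq]
  simp only [Real.norm_eq_abs, sq_abs]
  exact le_ciSup (Set.finite_range fun i => √(∑ j, U i j ^ 2)).bddAbove i

theorem frobenius_norm_le_sqrt_mul_rowMaxNorm : ‖U‖ ≤ √n * rowMaxNorm U := by
  rw [← pow_le_pow_iff_left₀ (norm_nonneg _) (mul_nonneg (Real.sqrt_nonneg _) (rowMaxNorm_nonneg U))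
    two_ne_zero, mul_pow, Real.sq_sqrt n.cast_nonneg, frobenius_norm_sq_eq_sum_norm_row]
  calc ∑ i, ‖toLp 2 (U i)‖ ^ 2 ≤ ∑ _i : Fin n, rowMaxNorm U ^ 2 :=
        Finset.sum_le_sum fun i _ => pow_le_pow_left₀ (norm_nonneg _) (norm_row_le_rowMaxNorm U i) 2
    _ = n * rowMaxNorm U ^ 2 := by simp

end rowMaxNorm

theorem traceNorm_mul_transpose_le {d1 d2 k : ℕ} (U : Matrix (Fin d1) (Fin k) ℝ)
    (V : Matrix (Fin d2) (Fin k) ℝ) :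
    traceNorm (U * Vᵀ) ≤ √(d1 * d2) * (rowMaxNorm U * rowMaxNorm V) :=
  calc traceNorm (U * Vᵀ) ≤ ‖U‖ * ‖V‖ := frobenius_norm_transpose V ▸ traceNorm_mul_le U Vᵀ
    _ ≤ (√d1 * rowMaxNorm U) * (√d2 * rowMaxNorm V) :=
        mul_le_mul (frobenius_norm_le_sqrt_mul_rowMaxNorm U)
          (frobenius_norm_le_sqrt_mul_rowMaxNorm V) (norm_nonneg _)
          (mul_nonneg (Real.sqrt_nonneg _) (rowMaxNorm_nonneg U))
    _ = √(d1 * d2) * (rowMaxNorm U * rowMaxNorm V) := by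
        rw [Real.sqrt_mul (Nat.cast_nonneg _)]
        ring

theorem exists_pos_eq_mul_transpose {m : Type*} {d : ℕ} (M : Matrix m (Fin d) ℝ) :
    ∃ (k : ℕ) (U : Matrix m (Fin k) ℝ) (V : Matrix (Fin d) (Fin k) ℝ), 0 < k ∧ M = U * Vᵀ := by
  rcases d.eq_zero_or_pos with rfl | hd
  · exact ⟨1, 0, 0, one_pos, Subsingleton.elim _ _⟩
  · exact ⟨d, M, 1, hd, by rw [transpose_one, Matrix.mul_one]⟩

/-- for every real matrix `M`, `‖M‖_* ≤ √(d1 d2) · ‖M‖_max`. -/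
theorem traceNorm_le_sqrt_dim_mul_maxNorm
    {d1 d2 : ℕ} (M : Matrix (Fin d1) (Fin d2) ℝ) :
    traceNorm M ≤ Real.sqrt (d1 * d2) * maxNorm M := by
  obtain ⟨k, U, V, hk, hM⟩ := exists_pos_eq_mul_transpose M
  rw [maxNorm, ← smul_eq_mul, ← Real.sInf_smul_of_nonneg (Real.sqrt_nonneg _)]
  refine le_csInf (Set.Nonempty.smul_set ⟨_, k, U, V, hk, hM, rfl⟩) ?_
  rintro _ ⟨_, ⟨k, U, V, -, rfl, rfl⟩, rfl⟩
  exact traceNorm_mul_transpose_le U V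
end

section
/- For every matrix M ∈ ℝ^{d1×d2}, the max-norm satisfies ‖M‖_∞ ≤ ‖M‖_max ≤ √(rank(M)) · ‖M‖_∞, where ‖M‖_∞ = max_{k,l} |M_{k,l}| is the elementwise ℓ∞-norm. -/
/-!
Factor `M = B C` through its column space, so that `B` has `r = rank M` independent columns.
Choose weights `μ` in the simplex on the rows `bᵢ` of `B` maximizing `det Σ`, where
`Σ = Bᵀ diag(μ) B` (a D-optimal design). Moving the weights towards a vertex cannot increase the
determinant, and by the matrix determinant lemma this forces `bᵢᵀ Σ⁻¹ bᵢ ≤ r`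
(Kiefer–Wolfowitz). Writing `Σ = SᵀS`, the factorization `M = (B S⁻¹)(S C)` has rows of `B S⁻¹`
of squared norm `bᵢᵀ Σ⁻¹ bᵢ ≤ r` and columns of `S C` of squared norm
`∑ᵢ μᵢ M_{il}² ≤ ‖M‖_∞²`. The lower bound is Cauchy–Schwarz on each entry of `U Vᵀ`.
-/

open scoped BigOperators
open Matrix

/-- The elementwise `ℓ∞`-norm of a matrix: `max_{k,l} |M_{k,l}|`. -/
noncomputable def linfNorm {d1 d2 : ℕ} (M : Matrix (Fin d1) (Fin d2) ℝ) : ℝ :=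
  ⨆ k, ⨆ l, |M k l|

lemma le_of_forall_one_add_mul_le_one_add_pow {q : ℝ} {r : ℕ}
    (h : ∀ s > 0, 1 + s * q ≤ (1 + s) ^ r) : q ≤ r := by
  have hslope := (hasDerivAt_pow r (1 : ℝ)).tendsto_slope_zero_right
  simp only [one_pow, mul_one, smul_eq_mul] at hslope
  refine ge_of_tendsto hslope ?_
  filter_upwards [self_mem_nhdsWithin] with s (hs : 0 < s)
  rw [le_inv_mul_iff₀ hs]
  linarith [h s hs]

theorem Matrix.det_add_vecMulVec {n K : Type*} [Fintype n] [DecidableEq n] [CommRing K]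
    {A : Matrix n n K} (hA : IsUnit A.det) (u v : n → K) :
    (A + vecMulVec u v).det = A.det * (1 + v ⬝ᵥ A⁻¹ *ᵥ u) := by
  rw [vecMulVec_eq Unit, det_add_replicateCol_mul_replicateRow hA, Matrix.mul_assoc,
    ← replicateCol_mulVec, det_unique (1 + _ : Matrix Unit Unit K)]
  rfl

theorem Matrix.exists_eq_mul_injective_mulVec {m n K : Type*} [Fintype m] [Fintype n]
    [DecidableEq n] [Field K] (A : Matrix m n K) :
    ∃ (B : Matrix m (Fin A.rank) K) (C : Matrix (Fin A.rank) n K),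
      A = B * C ∧ Function.Injective B.mulVec := by
  let b : Module.Basis (Fin A.rank) K (LinearMap.range A.mulVecLin) :=
    Module.finBasisOfFinrankEq K _ rfl
  have hcol : ∀ l, A.col l ∈ LinearMap.range A.mulVecLin :=
    fun l => ⟨Pi.single l 1, mulVec_single_one A l⟩
  refine ⟨of fun i j => (b j : m → K) i, of fun j l => b.repr ⟨A.col l, hcol l⟩ j, ?_, ?_⟩
  · ext i l
    have hcoord := congr_arg (fun v : LinearMap.range A.mulVecLin => (v : m → K) i)
      (b.sum_repr ⟨A.col l, hcol l⟩)
    simp only [Submodule.coe_sum, Submodule.coe_smul, Finset.sum_apply, Pi.smul_apply,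
      smul_eq_mul, col_apply] at hcoord
    simpa [Matrix.mul_apply, mul_comm] using hcoord.symm
  · have hmulVec : (of fun i j => (b j : m → K) i).mulVec = Subtype.val ∘ b.equivFun.symm := by
      ext x i
      simp [mulVec, dotProduct, Module.Basis.equivFun_symm_apply, mul_comm]
    rw [hmulVec]
    exact Subtype.val_injective.comp b.equivFun.symm.injective

section Norms

variable {d1 d2 k : ℕ}

lemma abs_le_linfNorm (M : Matrix (Fin d1) (Fin d2) ℝ) (i : Fin d1) (l : Fin d2) :
    |M i l| ≤ linfNorm M :=
  (le_ciSup (Finite.bddAbove_range _) l).trans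
    (le_ciSup (f := fun i => ⨆ l, |M i l|) (Finite.bddAbove_range _) i)

lemma linfNorm_le {M : Matrix (Fin d1) (Fin d2) ℝ} {c : ℝ} (hc : 0 ≤ c)
    (h : ∀ i l, |M i l| ≤ c) : linfNorm M ≤ c :=
  Real.iSup_le (fun i => Real.iSup_le (h i) hc) hc

lemma linfNorm_nonneg (M : Matrix (Fin d1) (Fin d2) ℝ) : 0 ≤ linfNorm M :=
  Real.iSup_nonneg fun _ => Real.iSup_nonneg fun _ => abs_nonneg _

lemma rowMaxNorm_nonneg_s2 (U : Matrix (Fin d1) (Fin k) ℝ) : 0 ≤ rowMaxNorm U :=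
  Real.iSup_nonneg fun _ => Real.sqrt_nonneg _

lemma sqrt_sum_sq_le_rowMaxNorm (U : Matrix (Fin d1) (Fin k) ℝ) (i : Fin d1) :
    √(∑ j, U i j ^ 2) ≤ rowMaxNorm U :=
  le_ciSup (f := fun i => √(∑ j, U i j ^ 2)) (Finite.bddAbove_range _) i

lemma rowMaxNorm_le {U : Matrix (Fin d1) (Fin k) ℝ} {c : ℝ} (hc : 0 ≤ c)
    (h : ∀ i, (U * Uᵀ) i i ≤ c ^ 2) : rowMaxNorm U ≤ c := by
  refine Real.iSup_le (fun i => Real.sqrt_le_iff.2 ⟨hc, ?_⟩) hc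
  simpa [Matrix.mul_apply, sq] using h i

lemma linfNorm_mul_transpose_le (U : Matrix (Fin d1) (Fin k) ℝ) (V : Matrix (Fin d2) (Fin k) ℝ) :
    linfNorm (U * Vᵀ) ≤ rowMaxNorm U * rowMaxNorm V := by
  refine linfNorm_le (mul_nonneg (rowMaxNorm_nonneg_s2 U) (rowMaxNorm_nonneg_s2 V)) fun i l => ?_
  calc |(U * Vᵀ) i l| ≤ √(∑ j, U i j ^ 2) * √(∑ j, V l j ^ 2) := by
        rw [← Real.sqrt_mul (Finset.sum_nonneg fun j _ => sq_nonneg _), ← Real.sqrt_sq_eq_abs]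
        refine Real.sqrt_le_sqrt ?_
        simpa [Matrix.mul_apply] using Finset.sum_mul_sq_le_sq_mul_sq Finset.univ (U i) (V l)
    _ ≤ rowMaxNorm U * rowMaxNorm V :=
        mul_le_mul (sqrt_sum_sq_le_rowMaxNorm U i) (sqrt_sum_sq_le_rowMaxNorm V l)
          (Real.sqrt_nonneg _) (rowMaxNorm_nonneg_s2 U)

end Norms

section WeightedGram

variable {m n : Type*} [Fintype m] [DecidableEq m]

def weightedGram (B : Matrix m n ℝ) (μ : m → ℝ) : Matrix n n ℝ := Bᵀ * diagonal μ * B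

variable (B : Matrix m n ℝ)

lemma weightedGram_apply (μ : m → ℝ) (j k : n) :
    weightedGram B μ j k = ∑ i, μ i * B i j * B i k := by
  simp only [weightedGram, Matrix.mul_apply, transpose_apply, diagonal_apply, mul_ite, mul_zero,
    Finset.sum_ite_eq', Finset.mem_univ, if_true]
  exact Finset.sum_congr rfl fun i _ => by ring

lemma weightedGram_add (μ ν : m → ℝ) :
    weightedGram B (μ + ν) = weightedGram B μ + weightedGram B ν := by
  ext j k
  simp only [weightedGram_apply, Matrix.add_apply, Pi.add_apply, add_mul, Finset.sum_add_distrib]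

lemma weightedGram_smul (c : ℝ) (μ : m → ℝ) :
    weightedGram B (c • μ) = c • weightedGram B μ := by
  ext j k
  simp only [weightedGram_apply, Matrix.smul_apply, Pi.smul_apply, smul_eq_mul, Finset.mul_sum,
    mul_assoc]

lemma weightedGram_single (i : m) : weightedGram B (Pi.single i 1) = vecMulVec (B i) (B i) := by
  ext j k
  simp [weightedGram_apply, Pi.single_apply, vecMulVec_apply]

lemma continuous_weightedGram : Continuous (weightedGram B) := by
  unfold weightedGram
  fun_prop

lemma weightedGram_apply_self_le_sq {c : ℝ} {μ : m → ℝ} (hμ : μ ∈ stdSimplex ℝ m) (j : n)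
    (hB : ∀ i, |B i j| ≤ c) : weightedGram B μ j j ≤ c ^ 2 := by
  calc weightedGram B μ j j = ∑ i, μ i * |B i j| ^ 2 := by
        rw [weightedGram_apply]
        exact Finset.sum_congr rfl fun i _ => by rw [sq_abs]; ring
    _ ≤ ∑ i, μ i * c ^ 2 := by
        gcongr with i
        · exact hμ.1 i
        · exact hB i
    _ = c ^ 2 := by rw [← Finset.sum_mul, hμ.2, one_mul]

variable [Fintype n]

lemma posSemidef_weightedGram {μ : m → ℝ} (hμ : ∀ i, 0 ≤ μ i) : (weightedGram B μ).PosSemidef := by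
  simpa [weightedGram] using (posSemidef_diagonal_iff.2 hμ).conjTranspose_mul_mul_same B

lemma posDef_weightedGram {μ : m → ℝ} (hμ : ∀ i, 0 < μ i) (hB : Function.Injective B.mulVec) :
    (weightedGram B μ).PosDef := by
  simpa [weightedGram] using (posDef_diagonal_iff.2 hμ).conjTranspose_mul_mul_same hB

lemma weightedGram_mul {p : Type*} [Fintype p] (C : Matrix n p ℝ) (μ : m → ℝ) :
    weightedGram (B * C) μ = Cᵀ * weightedGram B μ * C := by
  simp only [weightedGram, transpose_mul, Matrix.mul_assoc]

end WeightedGram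

section Design

variable {m n : Type*} [Fintype m] [DecidableEq m] [Fintype n] [DecidableEq n]
  (B : Matrix m n ℝ)

lemma one_add_mul_le_one_add_pow_of_isMaxOn {μ : m → ℝ} (hμ : μ ∈ stdSimplex ℝ m)
    (hmax : IsMaxOn (fun ν => (weightedGram B ν).det) (stdSimplex ℝ m) μ)
    (hdet : 0 < (weightedGram B μ).det) (i : m) {s : ℝ} (hs : 0 < s) :
    1 + s * (B i ⬝ᵥ (weightedGram B μ)⁻¹ *ᵥ B i) ≤ (1 + s) ^ Fintype.card n := by
  set G := weightedGram B μ
  set ν : m → ℝ := (1 + s)⁻¹ • (μ + s • Pi.single i 1)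
  have hν : ν ∈ stdSimplex ℝ m := by
    refine ⟨fun j => ?_, ?_⟩
    · have hμj := hμ.1 j
      have hej : 0 ≤ (Pi.single i (1 : ℝ) : m → ℝ) j := by
        rw [Pi.single_apply]; split_ifs <;> norm_num
      simp only [ν, Pi.smul_apply, Pi.add_apply, smul_eq_mul]
      positivity
    · simp only [ν, Pi.smul_apply, Pi.add_apply, smul_eq_mul, ← Finset.mul_sum,
        Finset.sum_add_distrib, hμ.2, Finset.sum_pi_single', Finset.mem_univ, if_true]
      field_simp
  have hdetν : (weightedGram B ν).det =
      ((1 + s) ^ Fintype.card n)⁻¹ * (G.det * (1 + s * (B i ⬝ᵥ G⁻¹ *ᵥ B i))) := by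
    rw [weightedGram_smul, weightedGram_add, weightedGram_smul, weightedGram_single,
      ← smul_vecMulVec, det_smul, det_add_vecMulVec hdet.ne'.isUnit, mulVec_smul, dotProduct_smul,
      inv_pow, smul_eq_mul]
  have hle : (weightedGram B ν).det ≤ G.det := hmax hν
  rw [hdetν, inv_mul_le_iff₀ (by positivity)] at hle
  nlinarith

theorem exists_mem_stdSimplex_dotProduct_weightedGram_inv_mulVec_le_card [Nonempty m]
    (hB : Function.Injective B.mulVec) :
    ∃ μ ∈ stdSimplex ℝ m, (weightedGram B μ).PosDef ∧
      ∀ i, B i ⬝ᵥ (weightedGram B μ)⁻¹ *ᵥ B i ≤ Fintype.card n := by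
  obtain ⟨μ, hμ, hmax⟩ := (isCompact_stdSimplex ℝ m).exists_isMaxOn
    ⟨_, single_mem_stdSimplex ℝ (Classical.arbitrary m)⟩
    (continuous_weightedGram B).matrix_det.continuousOn
  have hu : (fun _ => (Fintype.card m : ℝ)⁻¹) ∈ stdSimplex ℝ m :=
    ⟨fun _ => by positivity, by simp [Finset.card_univ]⟩
  have hdet : 0 < (weightedGram B μ).det :=
    (posDef_weightedGram B (fun _ => by positivity) hB).det_pos.trans_le (hmax hu)
  refine ⟨μ, hμ, (posSemidef_weightedGram B hμ.1).posDef_iff_det_ne_zero.2 hdet.ne',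
    fun i => le_of_forall_one_add_mul_le_one_add_pow fun s hs => ?_⟩
  exact one_add_mul_le_one_add_pow_of_isMaxOn B hμ hmax hdet i hs

end Design

open scoped MatrixOrder in
lemma exists_mul_eq_mul_transpose_rowMaxNorm_le {d1 d2 r : ℕ} [Nonempty (Fin d1)]
    (B : Matrix (Fin d1) (Fin r) ℝ) (C : Matrix (Fin r) (Fin d2) ℝ)
    (hB : Function.Injective B.mulVec) :
    ∃ (U : Matrix (Fin d1) (Fin r) ℝ) (V : Matrix (Fin d2) (Fin r) ℝ),
      B * C = U * Vᵀ ∧ rowMaxNorm U ≤ √r ∧ rowMaxNorm V ≤ linfNorm (B * C) := by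
  obtain ⟨μ, hμ, hG, hlev⟩ := exists_mem_stdSimplex_dotProduct_weightedGram_inv_mulVec_le_card B hB
  obtain ⟨S, hS, hGS⟩ :=
    CStarAlgebra.isStrictlyPositive_iff_eq_star_mul_self.mp hG.isStrictlyPositive
  rw [star_eq_conjTranspose, conjTranspose_eq_transpose_of_trivial] at hGS
  refine ⟨B * S⁻¹, (S * C)ᵀ, ?_, rowMaxNorm_le (Real.sqrt_nonneg _) fun i => ?_,
    rowMaxNorm_le (linfNorm_nonneg _) fun l => ?_⟩
  · rw [transpose_transpose, Matrix.mul_assoc,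
      nonsing_inv_mul_cancel_left _ _ ((isUnit_iff_isUnit_det S).mp hS)]
  · have hU : B * S⁻¹ * (B * S⁻¹)ᵀ = B * (weightedGram B μ)⁻¹ * Bᵀ := by
      rw [hGS, Matrix.mul_inv_rev, ← transpose_nonsing_inv, transpose_mul]
      simp only [Matrix.mul_assoc]
    rw [hU, Real.sq_sqrt (Nat.cast_nonneg _), Matrix.mul_assoc, mul_apply]
    simpa only [Matrix.mul_apply, transpose_apply, mulVec, dotProduct, Fintype.card_fin]
      using hlev i
  · have hV : (S * C)ᵀ * (S * C)ᵀᵀ = weightedGram (B * C) μ := by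
      rw [transpose_transpose, weightedGram_mul, hGS, transpose_mul]
      simp only [Matrix.mul_assoc]
    rw [hV]
    exact weightedGram_apply_self_le_sq _ hμ l fun i => abs_le_linfNorm _ i l

lemma exists_eq_mul_transpose_rowMaxNorm_le {d1 d2 : ℕ} (M : Matrix (Fin d1) (Fin d2) ℝ) :
    ∃ k, 0 < k ∧ ∃ (U : Matrix (Fin d1) (Fin k) ℝ) (V : Matrix (Fin d2) (Fin k) ℝ),
      M = U * Vᵀ ∧ rowMaxNorm U ≤ √M.rank ∧ rowMaxNorm V ≤ linfNorm M := by
  obtain ⟨B, C, hM, hB⟩ := M.exists_eq_mul_injective_mulVec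
  rcases Nat.eq_zero_or_pos M.rank with hr | hr
  · have : IsEmpty (Fin M.rank) := by rw [hr]; infer_instance
    refine ⟨1, one_pos, 0, 0, ?_, rowMaxNorm_le (Real.sqrt_nonneg _) fun i => ?_,
      rowMaxNorm_le (linfNorm_nonneg M) fun i => ?_⟩
    · ext i l
      simp [hM, Matrix.mul_apply]
    all_goals simp [sq_nonneg]
  · have : Nonempty (Fin d1) := ⟨⟨0, hr.trans_le M.rank_le_height⟩⟩
    obtain ⟨U, V, hBC, hU, hV⟩ := exists_mul_eq_mul_transpose_rowMaxNorm_le B C hB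
    rw [← hM] at hBC hV
    exact ⟨M.rank, hr, U, V, hBC, hU, hV⟩

lemma maxNorm_le_of_eq_mul_transpose {d1 d2 k : ℕ} {M : Matrix (Fin d1) (Fin d2) ℝ}
    {U : Matrix (Fin d1) (Fin k) ℝ} {V : Matrix (Fin d2) (Fin k) ℝ} (hk : 0 < k) (hM : M = U * Vᵀ) :
    maxNorm M ≤ rowMaxNorm U * rowMaxNorm V := by
  refine csInf_le ⟨0, ?_⟩ ⟨k, U, V, hk, hM, rfl⟩
  rintro c ⟨k, U, V, -, -, rfl⟩
  exact mul_nonneg (rowMaxNorm_nonneg_s2 U) (rowMaxNorm_nonneg_s2 V)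

/-- for every real matrix `M`,
`‖M‖_∞ ≤ ‖M‖_max ≤ √(rank M) · ‖M‖_∞`. -/
theorem linf_le_maxNorm_le_sqrt_rank_mul_linf
    {d1 d2 : ℕ} (M : Matrix (Fin d1) (Fin d2) ℝ) :
    linfNorm M ≤ maxNorm M ∧ maxNorm M ≤ Real.sqrt (M.rank) * linfNorm M := by
  obtain ⟨k, hk, U, V, hM, hU, hV⟩ := exists_eq_mul_transpose_rowMaxNorm_le M
  refine ⟨le_csInf ⟨_, k, U, V, hk, hM, rfl⟩ ?_, ?_⟩
  · rintro c ⟨k, U, V, -, rfl, rfl⟩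
    exact linfNorm_mul_transpose_le U V
  · calc maxNorm M ≤ rowMaxNorm U * rowMaxNorm V := maxNorm_le_of_eq_mul_transpose hk hM
      _ ≤ √M.rank * linfNorm M := mul_le_mul hU hV (rowMaxNorm_nonneg_s2 V) (Real.sqrt_nonneg _)
end

section
/- Let α > 0, let F : ℝ → (0,1) be differentiable on [−α, α], and let s, t be real numbers with |s| ≤ α and |t| ≤ α. Then the squared Hellinger distance satisfies d_H²(F(s); F(t)) ≥ ( inf_{|x|≤α} (F'(x))² / (8 F(x)(1−F(x))) ) · (s − t)². -/
/-!
Put `θ(p) = arcsin √p ∈ [0, π/2]`, so that `sin θ(p) = √p` and `cos θ(p) = √(1 - p)`. Then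
`d_H²(p; q) = 2 - 2 cos (θ(p) - θ(q)) ≥ (θ(p) - θ(q))² / 2`, the inequality being valid because
`|θ(p) - θ(q)| ≤ π/2`. On the other hand `(θ ∘ F)' = F' / (2 √(F (1 - F)))`, so by the mean value
theorem `(θ(F s) - θ(F t))² / 2 = F'(c)² / (8 F(c) (1 - F(c))) · (s - t)²` for some `c` between
`s` and `t`.
-/

open Real Set

/-- The squared Hellinger distance between two Bernoulli parameters. -/
noncomputable def hellingerSq (p q : ℝ) : ℝ :=
  (Real.sqrt p - Real.sqrt q) ^ 2 + (Real.sqrt (1 - p) - Real.sqrt (1 - q)) ^ 2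

theorem Real.cos_le_one_sub_sq_div_four {x : ℝ} (hx : |x| ≤ π / 2) : cos x ≤ 1 - x ^ 2 / 4 := by
  wlog hx₀ : 0 < x generalizing x
  · rcases (not_lt.1 hx₀).eq_or_lt with rfl | hneg
    · simp
    · simpa using this (x := -x) (by rwa [abs_neg]) (by linarith)
  have hv₁ : x / 2 ≤ 1 := by linarith [(abs_le.1 hx).2, pi_le_four]
  have hsin := sin_gt_sub_cube (by positivity : 0 < x / 2)
  have hcos : cos x = 1 - 2 * sin (x / 2) ^ 2 := by
    have := cos_two_mul' (x / 2)
    rw [mul_div_cancel₀ x two_ne_zero] at this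
    linarith [sin_sq_add_cos_sq (x / 2)]
  have hcube : (x / 2) ^ 3 ≤ x / 2 := pow_le_of_le_one (by positivity) hv₁ (by norm_num)
  have hsin_ge : 5 / 6 * (x / 2) < sin (x / 2) := by linarith
  -- `2 sin² (x/2) > 2 (5/6)² (x/2)² ≥ x² / 4`
  nlinarith [mul_self_lt_mul_self (by positivity) hsin_ge]

theorem hellingerSq_eq_two_sub_two_cos {p q : ℝ} (hp : p ∈ Icc (0 : ℝ) 1) (hq : q ∈ Icc (0 : ℝ) 1) :
    hellingerSq p q = 2 - 2 * cos (arcsin √p - arcsin √q) := by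
  have hsin {r : ℝ} (hr : r ∈ Icc (0 : ℝ) 1) : sin (arcsin √r) = √r :=
    sin_arcsin (by linarith [sqrt_nonneg r]) (sqrt_le_one.2 hr.2)
  have hcos {r : ℝ} (hr : r ∈ Icc (0 : ℝ) 1) : cos (arcsin √r) = √(1 - r) := by
    rw [cos_arcsin, sq_sqrt hr.1]
  rw [hellingerSq, cos_sub, hsin hp, hsin hq, hcos hp, hcos hq]
  linear_combination sq_sqrt hp.1 + sq_sqrt (sub_nonneg.2 hp.2) + sq_sqrt hq.1 +
    sq_sqrt (sub_nonneg.2 hq.2)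

theorem sq_arcsin_sqrt_sub_div_two_le_hellingerSq {p q : ℝ} (hp : p ∈ Icc (0 : ℝ) 1)
    (hq : q ∈ Icc (0 : ℝ) 1) : (arcsin √p - arcsin √q) ^ 2 / 2 ≤ hellingerSq p q := by
  have hθ (r : ℝ) : arcsin √r ∈ Icc 0 (π / 2) :=
    ⟨arcsin_nonneg.2 (sqrt_nonneg r), arcsin_le_pi_div_two _⟩
  have hdist : |arcsin √p - arcsin √q| ≤ π / 2 := by
    obtain ⟨hp₀, hp₁⟩ := hθ p
    obtain ⟨hq₀, hq₁⟩ := hθ q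
    rw [abs_le]; constructor <;> linarith
  rw [hellingerSq_eq_two_sub_two_cos hp hq]
  linarith [cos_le_one_sub_sq_div_four hdist]

theorem HasDerivAt.arcsin_sqrt {f : ℝ → ℝ} {f' x : ℝ} (hf : HasDerivAt f f' x) (h₀ : 0 < f x)
    (h₁ : f x < 1) :
    HasDerivAt (fun y => arcsin √(f y)) (f' / (2 * √(f x * (1 - f x)))) x := by
  have hsqrt₁ : √(f x) < 1 := (sqrt_lt' one_pos).2 (by rwa [one_pow])
  have harcsin := hasDerivAt_arcsin (by linarith [sqrt_nonneg (f x)]) hsqrt₁.ne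
  have hderiv : f' / (2 * √(f x * (1 - f x))) = 1 / √(1 - √(f x) ^ 2) * (f' / (2 * √(f x))) := by
    rw [sq_sqrt h₀.le, sqrt_mul h₀.le]
    field_simp
  rw [hderiv]
  exact harcsin.comp x (hf.sqrt h₀.ne')

theorem exists_mem_uIcc_sub_eq_mul_sub {g g' : ℝ → ℝ} {s t : ℝ}
    (hg : ∀ x ∈ uIcc s t, HasDerivAt g (g' x) x) : ∃ c ∈ uIcc s t, g s - g t = g' c * (s - t) := by
  wlog hst : s ≤ t generalizing s t
  · obtain ⟨c, hc, h⟩ := this (uIcc_comm s t ▸ hg) (le_of_not_ge hst)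
    exact ⟨c, uIcc_comm s t ▸ hc, by linear_combination -h⟩
  rcases hst.eq_or_lt with rfl | hlt
  · exact ⟨s, left_mem_uIcc, by ring⟩
  rw [uIcc_of_le hst] at hg ⊢
  obtain ⟨c, hc, hslope⟩ := exists_hasDerivAt_eq_slope g g' hlt
    (fun x hx => (hg x hx).continuousAt.continuousWithinAt)
    (fun x hx => hg x (Ioo_subset_Icc_self hx))
  refine ⟨c, Ioo_subset_Icc_self hc, ?_⟩
  rw [hslope]
  field_simp [sub_ne_zero.2 hlt.ne']
  ring

theorem hellingerSq_lower_bound_general (α : ℝ) (F : ℝ → ℝ)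
    (hrange : ∀ x, 0 < F x ∧ F x < 1)
    (hdiff : ∀ x ∈ Set.Icc (-α) α, DifferentiableAt ℝ F x)
    (s t : ℝ) (hs : |s| ≤ α) (ht : |t| ≤ α) :
    sInf ((fun x => (deriv F x) ^ 2 / (8 * F x * (1 - F x))) '' Set.Icc (-α) α) *
        (s - t) ^ 2 ≤
      hellingerSq (F s) (F t) := by
  have hF (x : ℝ) : F x ∈ Icc (0 : ℝ) 1 := ⟨(hrange x).1.le, (hrange x).2.le⟩
  have hst : uIcc s t ⊆ Icc (-α) α := uIcc_subset_Icc (abs_le.1 hs) (abs_le.1 ht)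
  obtain ⟨c, hc, hmvt⟩ := exists_mem_uIcc_sub_eq_mul_sub fun x hx =>
    (hdiff x (hst hx)).hasDerivAt.arcsin_sqrt (hrange x).1 (hrange x).2
  have hvar : 0 < F c * (1 - F c) := mul_pos (hrange c).1 (sub_pos.2 (hrange c).2)
  have hbdd : BddBelow ((fun x => (deriv F x) ^ 2 / (8 * F x * (1 - F x))) '' Icc (-α) α) :=
    ⟨0, forall_mem_image.2 fun x _ =>
      div_nonneg (sq_nonneg _) (by nlinarith [(hrange x).1, (hrange x).2])⟩
  calc _ ≤ (deriv F c) ^ 2 / (8 * F c * (1 - F c)) * (s - t) ^ 2 := by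
        gcongr; exact csInf_le hbdd ⟨c, hst hc, rfl⟩
    _ = (arcsin √(F s) - arcsin √(F t)) ^ 2 / 2 := by
        rw [hmvt, mul_pow, div_pow, mul_pow, sq_sqrt hvar.le]
        field_simp
        ring
    _ ≤ hellingerSq (F s) (F t) := sq_arcsin_sqrt_sub_div_two_le_hellingerSq (hF s) (hF t)

/-- if `F : ℝ → (0,1)` is differentiable on `[−α, α]` and `|s|, |t| ≤ α`, then
`d_H²(F(s); F(t)) ≥ ( inf_{|x|≤α} (F'(x))² / (8 F(x)(1−F(x))) ) · (s − t)²`. -/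
theorem hellingerSq_lower_bound (α : ℝ) (hα : 0 < α) (F : ℝ → ℝ)
    (hrange : ∀ x, 0 < F x ∧ F x < 1)
    (hdiff : ∀ x ∈ Set.Icc (-α) α, DifferentiableAt ℝ F x)
    (s t : ℝ) (hs : |s| ≤ α) (ht : |t| ≤ α) :
    sInf ((fun x => (deriv F x) ^ 2 / (8 * F x * (1 - F x))) '' Set.Icc (-α) α) *
        (s - t) ^ 2 ≤
      hellingerSq (F s) (F t) :=
  hellingerSq_lower_bound_general α F hrange hdiff s t hs ht
end

section
/- Let F : ℝ → (0,1) be differentiable with F' nonincreasing on [0, ∞). Then for all real numbers 0 ≤ s ≤ t, the Kullback–Leibler divergence satisfies K(F(t) ‖ F(s)) ≤ (F(t) − F(s))² / ( F(s)(1 − F(s)) ) ≤ (t − s)² (F'(s))² / ( F(s)(1 − F(s)) ). -/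
/-!
`log x ≤ x - 1` bounds the Bernoulli divergence `K(p ‖ q)` by the χ²-divergence
`(p - q)² / (q (1 - q))`. An antitone derivative makes `F` concave on `[0, ∞)`, so
`0 ≤ F t - F s ≤ F'(s) (t - s)`; the lower bound holds because a concave function with a
negative slope somewhere on `[0, ∞)` would be unbounded below, while `F > 0`.
-/

/-- The Kullback–Leibler divergence between two Bernoulli parameters `p, q ∈ (0,1)`. -/
noncomputable def klBer (p q : ℝ) : ℝ :=
  p * Real.log (p / q) + (1 - p) * Real.log ((1 - p) / (1 - q))

open Real Set

lemma mul_log_div_le_mul_div_sub_one {a b : ℝ} (ha : 0 ≤ a) (hb : 0 < b) :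
    a * log (a / b) ≤ a * (a / b - 1) := by
  rcases ha.eq_or_lt with rfl | ha
  · simp
  · gcongr
    exact log_le_sub_one_of_pos (div_pos ha hb)

theorem klBer_le_sq_sub_div {p q : ℝ} (hp₀ : 0 ≤ p) (hp₁ : p ≤ 1) (hq₀ : 0 < q) (hq₁ : q < 1) :
    klBer p q ≤ (p - q) ^ 2 / (q * (1 - q)) := by
  have hq₁' : 0 < 1 - q := sub_pos.2 hq₁
  calc klBer p q ≤ p * (p / q - 1) + (1 - p) * ((1 - p) / (1 - q) - 1) :=
        add_le_add (mul_log_div_le_mul_div_sub_one hp₀ hq₀)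
          (mul_log_div_le_mul_div_sub_one (sub_nonneg.2 hp₁) hq₁')
    _ = (p - q) ^ 2 / (q * (1 - q)) := by
        field_simp
        ring

section AntitoneDeriv

variable {f : ℝ → ℝ} {a x y : ℝ}

theorem sub_le_deriv_mul_sub_of_antitoneOn (hf : Differentiable ℝ f)
    (hanti : AntitoneOn (deriv f) (Ici a)) (hax : a ≤ x) (hxy : x ≤ y) :
    f y - f x ≤ deriv f x * (y - x) := by
  refine (convex_Icc x y).image_sub_le_mul_sub_of_deriv_le hf.continuous.continuousOn
    hf.differentiableOn (fun z hz => ?_) x (left_mem_Icc.2 hxy) y (right_mem_Icc.2 hxy) hxy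
  rw [interior_Icc] at hz
  exact hanti (mem_Ici.2 hax) (mem_Ici.2 (hax.trans hz.1.le)) hz.1.le

theorem deriv_mul_sub_le_sub_of_antitoneOn (hf : Differentiable ℝ f)
    (hanti : AntitoneOn (deriv f) (Ici a)) (hax : a ≤ x) (hxy : x ≤ y) :
    deriv f y * (y - x) ≤ f y - f x := by
  refine (convex_Icc x y).mul_sub_le_image_sub_of_le_deriv hf.continuous.continuousOn
    hf.differentiableOn (fun z hz => ?_) x (left_mem_Icc.2 hxy) y (right_mem_Icc.2 hxy) hxy
  rw [interior_Icc] at hz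
  exact hanti (mem_Ici.2 (hax.trans hz.1.le)) (mem_Ici.2 (hax.trans hxy)) hz.2.le

theorem deriv_nonneg_of_antitoneOn_of_bddBelow (hf : Differentiable ℝ f)
    (hanti : AntitoneOn (deriv f) (Ici a)) (hbdd : BddBelow (f '' Ici a)) (hax : a ≤ x) :
    0 ≤ deriv f x := by
  obtain ⟨m, hm⟩ := hbdd
  by_contra! hneg
  -- the tangent line at `x` reaches `m - 1` at `y`, and `f` lies below it
  set y := x + (f x - m + 1) / -deriv f x
  have hxy : x ≤ y := le_add_of_nonneg_right <|
    div_nonneg (by linarith [hm ⟨x, hax, rfl⟩]) (neg_nonneg.2 hneg.le)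
  have hdrop : deriv f x * (y - x) = -(f x - m + 1) := by
    simp only [y, add_sub_cancel_left]
    field_simp [hneg.ne]
  have htangent := sub_le_deriv_mul_sub_of_antitoneOn hf hanti hax hxy
  linarith [hm ⟨y, hax.trans hxy, rfl⟩]

end AntitoneDeriv

/-- if `F : ℝ → (0,1)` is differentiable with `F'` nonincreasing on `[0,∞)`,
then for `0 ≤ s ≤ t`,
`K(F(t) ‖ F(s)) ≤ (F(t) − F(s))²/(F(s)(1−F(s))) ≤ (t−s)² (F'(s))²/(F(s)(1−F(s)))`. -/
theorem klBer_le_of_deriv_antitone (F : ℝ → ℝ) (hdiff : Differentiable ℝ F)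
    (hrange : ∀ x, 0 < F x ∧ F x < 1)
    (hanti : ∀ x y : ℝ, 0 ≤ x → x ≤ y → deriv F y ≤ deriv F x)
    (s t : ℝ) (hs : 0 ≤ s) (hst : s ≤ t) :
    klBer (F t) (F s) ≤ (F t - F s) ^ 2 / (F s * (1 - F s)) ∧
      (F t - F s) ^ 2 / (F s * (1 - F s)) ≤
        (t - s) ^ 2 * (deriv F s) ^ 2 / (F s * (1 - F s)) := by
  obtain ⟨hFs₀, hFs₁⟩ := hrange s
  obtain ⟨hFt₀, hFt₁⟩ := hrange t
  have hantiOn : AntitoneOn (deriv F) (Ici 0) := fun x hx y _ hxy => hanti x y hx hxy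
  have hbdd : BddBelow (F '' Ici 0) := ⟨0, by rintro _ ⟨x, -, rfl⟩; exact (hrange x).1.le⟩
  have hupper := sub_le_deriv_mul_sub_of_antitoneOn hdiff hantiOn hs hst
  have hlower : 0 ≤ F t - F s :=
    (mul_nonneg (deriv_nonneg_of_antitoneOn_of_bddBelow hdiff hantiOn hbdd (hs.trans hst))
      (sub_nonneg.2 hst)).trans (deriv_mul_sub_le_sub_of_antitoneOn hdiff hantiOn hs hst)
  refine ⟨klBer_le_sq_sub_div hFt₀.le hFt₁.le hFs₀ hFs₁, ?_⟩
  rw [← mul_pow, mul_comm (t - s)]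
  gcongr
end
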